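/- arXiv:2411.17635 — 2 statements merged into one kernel-verified Lean document; each statement's English description precedes it below -/
import Mathlib

section
/- Let α > 2, α' = α/(α−1), β = α/(α−2), and let H : ℝ^{3×3} → ℝ satisfy 0 ≤ H(A) ≤ (1/α) |A|^α for all A. If λ, μ ∈ ℝ^{3×3} satisfy |λ| ≤ (1/(4α')) |μ|^{2−α'}, then g_H(λ, μ) ≥ (1/(4α')) ( |μ|^{α'} + |λ|^β ). In particular, a suitable witness is A = μ |μ|^{α'−2} (and A = 0 when μ = 0). -/
open scoped BigOperators

noncomputable section

/-- `3 × 3` real matrices, as functions of (row, column). -/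
abbrev M33 := Fin 3 → Fin 3 → ℝ

/-- The Levi-Civita symbol on indices in `Fin 3`. -/
def eps (i j k : Fin 3) : ℝ :=
  ((i.val : ℝ) - j.val) * ((j.val : ℝ) - k.val) * ((k.val : ℝ) - i.val) / 2

/-- The contraction `X : Y = Σ_{i,j} X_{ij} Y_{ij}`. -/
def dotM (X Y : M33) : ℝ := ∑ i, ∑ j, X i j * Y i j

/-- `T(A)_{Zp} = ε_{pqr} ε_{ZBC} A_{Bq} A_{Cr}`. -/
def Tmap (A : M33) : M33 :=
  fun Z p => ∑ q, ∑ r, ∑ B, ∑ C, eps p q r * eps Z B C * A B q * A C r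

/-- The Frobenius norm on `M33`. -/
def fnorm (A : M33) : ℝ := Real.sqrt (∑ i, ∑ j, (A i j) ^ 2)

/-- `g_H(λ, μ) = sup_{A} ( A:μ + λ:T(A) − H(A) )`, valued in `ℝ ∪ {±∞}` (the
supremum is never `-∞` since `H` is real-valued). -/
def gH (H : M33 → ℝ) (lam mu : M33) : EReal :=
  ⨆ A : M33, ((dotM A mu + dotM lam (Tmap A) - H A : ℝ) : EReal)



lemma fnorm_nonneg' (A : M33) : 0 ≤ fnorm A := Real.sqrt_nonneg _

lemma fnorm_sq (A : M33) : fnorm A ^ 2 = ∑ i, ∑ j, (A i j) ^ 2 := by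
  rw [fnorm, Real.sq_sqrt (by positivity)]

lemma dot_lower (x y : M33) : -(fnorm x * fnorm y) ≤ dotM x y := by
  have h := Real.sum_mul_le_sqrt_mul_sqrt (Finset.univ : Finset (Fin 3 × Fin 3))
      (fun p => -x p.1 p.2) (fun p => y p.1 p.2)
  simp only [Fintype.sum_prod_type, neg_mul, neg_sq, Finset.sum_neg_distrib] at h
  rw [dotM, fnorm, fnorm]
  linarith [h]

set_option maxHeartbeats 2000000 in
lemma Tmap_eq (a : M33) (Z p : Fin 3) : Tmap a Z p =
    2 * (a (Z+1) (p+1) * a (Z+2) (p+2) - a (Z+1) (p+2) * a (Z+2) (p+1)) := by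
  fin_cases Z <;> fin_cases p <;>
    simp [Tmap, eps, Fin.sum_univ_three, Fin.isValue] <;> norm_num <;> ring

set_option maxHeartbeats 1000000 in
lemma Tsq (a : M33) : (∑ i, ∑ j, (Tmap a i j)^2) ≤ 4 * (∑ i, ∑ j, (a i j)^2)^2 := by
  have key : 4 * (∑ i, ∑ j, (a i j)^2)^2 - (∑ i, ∑ j, (Tmap a i j)^2) =
      4 * ((a 0 0^2 + a 0 1^2 + a 0 2^2)^2 + (a 1 0^2 + a 1 1^2 + a 1 2^2)^2
        + (a 2 0^2 + a 2 1^2 + a 2 2^2)^2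
        + (a 0 0^2 + a 0 1^2 + a 0 2^2) * (a 1 0^2 + a 1 1^2 + a 1 2^2)
        + (a 0 0^2 + a 0 1^2 + a 0 2^2) * (a 2 0^2 + a 2 1^2 + a 2 2^2)
        + (a 1 0^2 + a 1 1^2 + a 1 2^2) * (a 2 0^2 + a 2 1^2 + a 2 2^2)
        + (a 0 0 * a 1 0 + a 0 1 * a 1 1 + a 0 2 * a 1 2)^2
        + (a 0 0 * a 2 0 + a 0 1 * a 2 1 + a 0 2 * a 2 2)^2
        + (a 1 0 * a 2 0 + a 1 1 * a 2 1 + a 1 2 * a 2 2)^2) := by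
    simp only [Fin.sum_univ_three, Tmap_eq,
      show ((0:Fin 3)+1) = 1 by decide, show ((0:Fin 3)+2) = 2 by decide,
      show ((1:Fin 3)+1) = 2 by decide, show ((1:Fin 3)+2) = 0 by decide,
      show ((2:Fin 3)+1) = 0 by decide, show ((2:Fin 3)+2) = 1 by decide]
    ring
  linarith [key, sq_nonneg (a 0 0 * a 1 0 + a 0 1 * a 1 1 + a 0 2 * a 1 2),
    sq_nonneg (a 0 0 * a 2 0 + a 0 1 * a 2 1 + a 0 2 * a 2 2),
    sq_nonneg (a 1 0 * a 2 0 + a 1 1 * a 2 1 + a 1 2 * a 2 2),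
    sq_nonneg (a 0 0^2 + a 0 1^2 + a 0 2^2),
    sq_nonneg (a 1 0^2 + a 1 1^2 + a 1 2^2),
    sq_nonneg (a 2 0^2 + a 2 1^2 + a 2 2^2),
    mul_nonneg (by positivity : (0:ℝ) ≤ a 0 0^2 + a 0 1^2 + a 0 2^2) (by positivity : (0:ℝ) ≤ a 1 0^2 + a 1 1^2 + a 1 2^2),
    mul_nonneg (by positivity : (0:ℝ) ≤ a 0 0^2 + a 0 1^2 + a 0 2^2) (by positivity : (0:ℝ) ≤ a 2 0^2 + a 2 1^2 + a 2 2^2),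
    mul_nonneg (by positivity : (0:ℝ) ≤ a 1 0^2 + a 1 1^2 + a 1 2^2) (by positivity : (0:ℝ) ≤ a 2 0^2 + a 2 1^2 + a 2 2^2)]

lemma fnorm_Tmap_le (a : M33) : fnorm (Tmap a) ≤ 2 * fnorm a ^ 2 := by
  have h := Tsq a
  have := Real.sqrt_le_sqrt h
  rw [show (4 : ℝ) * (∑ i, ∑ j, (a i j)^2)^2 = (2 * ∑ i, ∑ j, (a i j)^2)^2 by ring,
    Real.sqrt_sq (by positivity)] at this
  rw [fnorm_sq]
  exact this

lemma fnorm_smul (mu : M33) (c : ℝ) (hc : 0 ≤ c) :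
    fnorm (fun i j => mu i j * c) = c * fnorm mu := by
  rw [fnorm, fnorm, show (∑ i, ∑ j, (mu i j * c)^2) = c^2 * ∑ i, ∑ j, (mu i j)^2 by
    simp only [Finset.mul_sum]; exact Finset.sum_congr rfl fun i _ =>
      Finset.sum_congr rfl fun j _ => by ring,
    Real.sqrt_mul (sq_nonneg c), Real.sqrt_sq hc]

lemma dot_smul (mu : M33) (c : ℝ) :
    dotM (fun i j => mu i j * c) mu = c * ∑ i, ∑ j, (mu i j)^2 := by
  simp only [dotM, Finset.mul_sum]
  exact Finset.sum_congr rfl fun i _ => Finset.sum_congr rfl fun j _ => by ring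

set_option maxHeartbeats 1000000 in
theorem stmt5 (α : ℝ) (hα : 2 < α) (H : M33 → ℝ)
    (hH0 : ∀ A, 0 ≤ H A) (hH1 : ∀ A, H A ≤ (1 / α) * fnorm A ^ α)
    (lam mu : M33)
    (hsmall : fnorm lam ≤ (1 / (4 * (α / (α - 1)))) * fnorm mu ^ (2 - α / (α - 1))) :
    (((1 / (4 * (α / (α - 1)))) *
        (fnorm mu ^ (α / (α - 1)) + fnorm lam ^ (α / (α - 2))) : ℝ) : EReal) ≤
      gH H lam mu ∧
    -- the witness `A = μ |μ|^{α'−2}` (which is `0` when `μ = 0`) realizes the bound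
    (1 / (4 * (α / (α - 1)))) *
        (fnorm mu ^ (α / (α - 1)) + fnorm lam ^ (α / (α - 2))) ≤
      dotM (fun i j => mu i j * fnorm mu ^ (α / (α - 1) - 2)) mu
        + dotM lam (Tmap (fun i j => mu i j * fnorm mu ^ (α / (α - 1) - 2)))
        - H (fun i j => mu i j * fnorm mu ^ (α / (α - 1) - 2)) := by
  set a' : ℝ := α / (α - 1) with ha'def
  set β : ℝ := α / (α - 2) with hβdef
  have hα1 : (0:ℝ) < α - 1 := by linarith
  have hα2 : (0:ℝ) < α - 2 := by linarith
  have hαpos : (0:ℝ) < α := by linarith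
  have ha'1 : 1 < a' := by rw [ha'def, lt_div_iff₀ hα1]; linarith
  have ha'2 : a' < 2 := by rw [ha'def, div_lt_iff₀ hα1]; linarith
  have ha'pos : 0 < a' := by linarith
  have hβ1 : 1 < β := by rw [hβdef, lt_div_iff₀ hα2]; linarith
  set k : ℝ := 1 / (4 * a') with hkdef
  have hkpos : 0 < k := by positivity
  have hk4 : k ≤ 1 / 4 := by
    rw [hkdef]
    rw [div_le_div_iff₀ (by positivity) (by norm_num)]
    nlinarith
  have hk1 : k ≤ 1 := by linarith
  set m : ℝ := fnorm mu with hmdef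
  set l : ℝ := fnorm lam with hldef
  have hm : 0 ≤ m := fnorm_nonneg' mu
  have hl : 0 ≤ l := fnorm_nonneg' lam
  set c : ℝ := m ^ (a' - 2) with hcdef
  have hc : 0 ≤ c := Real.rpow_nonneg hm _
  set A : M33 := fun i j => mu i j * c with hAdef
  -- structural facts
  have hfA : fnorm A = c * m := fnorm_smul mu c hc
  have hdA : dotM A mu = c * ∑ i, ∑ j, (mu i j)^2 := dot_smul mu c
  have hSmu : (∑ i, ∑ j, (mu i j)^2) = m ^ 2 := (fnorm_sq mu).symm
  have hdotT : -(l * (2 * (c * m) ^ 2)) ≤ dotM lam (Tmap A) := by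
    have h1 := dot_lower lam (Tmap A)
    have h2 := fnorm_Tmap_le A
    rw [hfA] at h2
    nlinarith [fnorm_nonneg' (Tmap A), hl]
  have hHA : H A ≤ (1/α) * (c * m) ^ α := by
    have := hH1 A; rwa [hfA] at this
  -- the key real inequality
  have key : k * (m ^ a' + l ^ β) ≤
      c * m ^ 2 - l * (2 * (c * m) ^ 2) - (1/α) * (c * m) ^ α := by
    rcases eq_or_lt_of_le hm with hm0 | hm0
    · -- m = 0
      have hm0 : m = 0 := hm0.symm
      have hc0 : c = 0 := by
        rw [hcdef, hm0, Real.zero_rpow (by linarith : a' - 2 ≠ 0)]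
      have hl0 : l = 0 := by
        have : l ≤ k * (0:ℝ) ^ (2 - a') := by rw [← hm0]; exact hsmall
        rw [Real.zero_rpow (by linarith : 2 - a' ≠ 0), mul_zero] at this
        linarith
      rw [hm0, hc0, hl0, Real.zero_rpow (by linarith : a' ≠ 0),
        Real.zero_rpow (by linarith : β ≠ 0)]
      norm_num
      rw [Real.zero_rpow (by linarith : α ≠ 0)]
      norm_num
    · -- m > 0
      have hcm : c * m = m ^ (a' - 1) := by
        rw [hcdef, ← Real.rpow_add_one hm0.ne']
        congr 1
        ring
      have e1 : c * m ^ 2 = m ^ a' := by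
        rw [hcdef, ← Real.rpow_natCast m 2, ← Real.rpow_add hm0]
        congr 1
        push_cast
        ring
      have e2 : (c * m) ^ 2 = m ^ (2 * a' - 2) := by
        rw [hcm, ← Real.rpow_natCast (m ^ (a' - 1)) 2, ← Real.rpow_mul hm]
        congr 1
        push_cast
        ring
      have e3 : (c * m) ^ α = m ^ a' := by
        rw [hcm, ← Real.rpow_mul hm]
        congr 1
        rw [ha'def]
        field_simp
        ring
      rw [e1, e2, e3]
      -- bound the T-term
      have hb1 : l * (2 * m ^ (2 * a' - 2)) ≤ 2 * k * m ^ a' := by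
        have h1 : l * m ^ (2 * a' - 2) ≤ k * m ^ (2 - a') * m ^ (2 * a' - 2) :=
          mul_le_mul_of_nonneg_right hsmall (Real.rpow_nonneg hm _)
        have h2 : m ^ (2 - a') * m ^ (2 * a' - 2) = m ^ a' := by
          rw [← Real.rpow_add hm0]; ring_nf
        nlinarith [h1, h2]
      -- bound l^β
      have hb2 : l ^ β ≤ k * m ^ a' := by
        have h1 : l ^ β ≤ (k * m ^ (2 - a')) ^ β :=
          Real.rpow_le_rpow hl hsmall (by linarith)
        have h2 : (k * m ^ (2 - a')) ^ β = k ^ β * m ^ ((2 - a') * β) := by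
          rw [Real.mul_rpow (le_of_lt hkpos) (Real.rpow_nonneg hm _),
            ← Real.rpow_mul hm]
        have h3 : (2 - a') * β = a' := by
          rw [ha'def, hβdef]; field_simp; ring
        have h4 : k ^ β ≤ k := by
          calc k ^ β ≤ k ^ (1:ℝ) :=
            Real.rpow_le_rpow_of_exponent_ge hkpos hk1 (by linarith)
          _ = k := Real.rpow_one k
        calc l ^ β ≤ k ^ β * m ^ a' := by rw [← h3, ← h2]; exact h1
        _ ≤ k * m ^ a' := mul_le_mul_of_nonneg_right h4 (Real.rpow_nonneg hm _)
      -- coefficient inequality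
      have hcoef : 3 * k + k * k + 1 / α ≤ 1 := by
        have hk' : k = (α - 1) / (4 * α) := by
          rw [hkdef, ha'def]; field_simp
        rw [hk']
        have hnum : (0:ℝ) ≤ (3*α^2 - 2*α - 1) / (16*α^2) := by
          apply div_nonneg _ (by positivity)
          nlinarith
        have hid : 1 - (3 * ((α - 1) / (4 * α)) + (α - 1) / (4 * α) * ((α - 1) / (4 * α))
            + 1 / α) = (3*α^2 - 2*α - 1) / (16*α^2) := by
          field_simp
          ring
        linarith [hid ▸ hnum]
      have hM : 0 ≤ m ^ a' := Real.rpow_nonneg hm _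
      nlinarith [hb1, hb2, hM, hkpos.le, hcoef, mul_le_mul_of_nonneg_left hb2 hkpos.le,
        mul_le_mul_of_nonneg_right hcoef hM]
  have main : (1 / (4 * a')) * (m ^ a' + l ^ β) ≤
      dotM A mu + dotM lam (Tmap A) - H A := by
    have : c * m ^ 2 - l * (2 * (c * m) ^ 2) - (1/α) * (c * m) ^ α ≤
        dotM A mu + dotM lam (Tmap A) - H A := by
      rw [hdA, hSmu]
      have := hdotT
      have := hHA
      linarith
    calc (1 / (4 * a')) * (m ^ a' + l ^ β) = k * (m ^ a' + l ^ β) := by rw [hkdef]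
    _ ≤ _ := le_trans key this
  refine ⟨?_, main⟩
  calc (((1 / (4 * a')) * (m ^ a' + l ^ β) : ℝ) : EReal)
      ≤ ((dotM A mu + dotM lam (Tmap A) - H A : ℝ) : EReal) := EReal.coe_le_coe_iff.2 main
    _ ≤ gH H lam mu := by
      rw [gH]
      exact le_iSup (fun B : M33 => ((dotM B mu + dotM lam (Tmap B) - H B : ℝ) : EReal)) A
end
end

section
/- Let α > 2, α' = α/(α−1), β = α/(α−2), and let H : ℝ^{3×3} → ℝ satisfy 0 ≤ H(A) ≤ (1/2^{α/2}) (1/α) |A|^α for all A. If λ, μ ∈ ℝ^{3×3} satisfy |μ| ≤ (1/(4 · 3^{β/2})) |λ|^{1/(2−α')}, then g_H(λ, μ) ≥ (1/(4 · 3^{β/2})) ( |λ|^β + |μ|^{α'} ). -/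
open scoped BigOperators

noncomputable section

/-! ### Auxiliary material -/

/-- The test matrix: two nonzero entries placed so that `T` produces a multiple
of the elementary matrix at position `(Z, p)`. -/
def Amat (Z p : Fin 3) (s σ : ℝ) : M33 :=
  fun i j => if i = Z + 1 ∧ j = p + 1 then s else if i = Z + 2 ∧ j = p + 2 then σ * s else 0

set_option maxHeartbeats 3000000 in
lemma dotM_Tmap_Amat (lam : M33) (Z p : Fin 3) (s σ : ℝ) :
    dotM lam (Tmap (Amat Z p s σ)) = 2 * σ * s ^ 2 * lam Z p := by
  fin_cases Z <;> fin_cases p <;>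
    · norm_num (config := { decide := true }) [dotM, Tmap, Amat, eps, Fin.sum_univ_three,
        show (⟨2, by norm_num⟩ : Fin 3) = 2 from rfl]
      try simp only [show ((3 : Fin 3)) = 0 from rfl, show ((4 : Fin 3)) = 1 from rfl]
      try tauto
      try ring

set_option maxHeartbeats 1000000 in
lemma dotM_Amat (mu : M33) (Z p : Fin 3) (s σ : ℝ) :
    dotM (Amat Z p s σ) mu = s * mu (Z + 1) (p + 1) + σ * s * mu (Z + 2) (p + 2) := by
  fin_cases Z <;> fin_cases p <;>
    · norm_num (config := { decide := true }) [dotM, Amat, Fin.sum_univ_three,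
        show (⟨2, by norm_num⟩ : Fin 3) = 2 from rfl]
      try simp only [show ((3 : Fin 3)) = 0 from rfl, show ((4 : Fin 3)) = 1 from rfl]
      try tauto
      try ring
      try rfl

set_option maxHeartbeats 1000000 in
lemma sq_sum_Amat (Z p : Fin 3) (s σ : ℝ) :
    (∑ i, ∑ j, (Amat Z p s σ i j) ^ 2) = s ^ 2 + (σ * s) ^ 2 := by
  fin_cases Z <;> fin_cases p <;>
    · norm_num (config := { decide := true }) [Amat, Fin.sum_univ_three,
        show (⟨2, by norm_num⟩ : Fin 3) = 2 from rfl]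
      try simp only [show ((3 : Fin 3)) = 0 from rfl, show ((4 : Fin 3)) = 1 from rfl]
      try tauto
      try ring

lemma abs_entry_le_fnorm (X : M33) (i j : Fin 3) : |X i j| ≤ fnorm X := by
  have h1 : (X i j) ^ 2 ≤ ∑ i', ∑ j', (X i' j') ^ 2 := by
    have h2 : (X i j) ^ 2 ≤ ∑ j', (X i j') ^ 2 :=
      Finset.single_le_sum (fun k _ => sq_nonneg (X i k)) (Finset.mem_univ j)
    refine h2.trans ?_
    exact Finset.single_le_sum (f := fun i' => ∑ j', (X i' j') ^ 2)
      (fun k _ => Finset.sum_nonneg fun l _ => sq_nonneg _) (Finset.mem_univ i)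
  calc |X i j| = Real.sqrt ((X i j) ^ 2) := (Real.sqrt_sq_eq_abs _).symm
    _ ≤ fnorm X := Real.sqrt_le_sqrt h1

lemma exists_big_entry (X : M33) : ∃ i j, fnorm X ≤ 3 * |X i j| := by
  obtain ⟨⟨i, j⟩, -, hmax⟩ := Finset.exists_max_image (Finset.univ : Finset (Fin 3 × Fin 3))
    (fun x => (X x.1 x.2) ^ 2) ⟨(0, 0), Finset.mem_univ _⟩
  refine ⟨i, j, ?_⟩
  have h1 : (∑ i', ∑ j', (X i' j') ^ 2) ≤ 9 * (X i j) ^ 2 := by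
    have hm : ∀ i' j' : Fin 3, (X i' j') ^ 2 ≤ (X i j) ^ 2 := fun i' j' =>
      hmax (i', j') (Finset.mem_univ _)
    calc (∑ i', ∑ j', (X i' j') ^ 2) ≤ ∑ _i' : Fin 3, ∑ _j' : Fin 3, (X i j) ^ 2 :=
        Finset.sum_le_sum fun i' _ => Finset.sum_le_sum fun j' _ => hm i' j'
      _ = 9 * (X i j) ^ 2 := by simp [Finset.sum_const]; ring
  calc fnorm X ≤ Real.sqrt (9 * (X i j) ^ 2) := Real.sqrt_le_sqrt h1
    _ = 3 * |X i j| := by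
        rw [show (9 : ℝ) * (X i j) ^ 2 = (3 * |X i j|) ^ 2 by rw [mul_pow, sq_abs]; ring]
        exact Real.sqrt_sq (by positivity)

lemma core_ineq (x : ℝ) (hx : 0 ≤ x) : Real.sqrt 3 * (1 + 2 * x) ≤ 2 * (4 : ℝ) ^ x := by
  have l2 : (0.6931471803 : ℝ) < Real.log 2 := Real.log_two_gt_d9
  have e1 : (4 : ℝ) ^ x = Real.exp (Real.log 2 * x) * Real.exp (Real.log 2 * x) := by
    rw [← Real.exp_add, Real.rpow_def_of_pos (by norm_num : (0 : ℝ) < 4)]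
    congr 1
    rw [show (4 : ℝ) = 2 ^ (2 : ℕ) by norm_num, Real.log_pow]
    push_cast; ring
  have e2 : Real.log 2 * x + 1 ≤ Real.exp (Real.log 2 * x) := Real.add_one_le_exp _
  have s0 : 0 ≤ Real.sqrt 3 := Real.sqrt_nonneg 3
  have s3 : Real.sqrt 3 * Real.sqrt 3 = 3 := Real.mul_self_sqrt (by norm_num)
  have hs : Real.sqrt 3 ≤ 1.74 := by nlinarith
  have hy : (0 : ℝ) ≤ Real.log 2 * x + 1 := by nlinarith
  have ha : (0.6931471803 : ℝ) * x ≤ Real.log 2 * x := mul_le_mul_of_nonneg_right l2.le hx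
  have hax : (0 : ℝ) ≤ 0.6931471803 * x := mul_nonneg (by norm_num) hx
  have H6 : ((0.6931471803 : ℝ) * x) * ((0.6931471803 : ℝ) * x) ≤
      (Real.log 2 * x) * (Real.log 2 * x) := mul_le_mul ha ha hax (le_trans hax ha)
  have H1 : (Real.log 2 * x + 1) * (Real.log 2 * x + 1) ≤
      Real.exp (Real.log 2 * x) * Real.exp (Real.log 2 * x) :=
    mul_le_mul e2 e2 hy (Real.exp_pos _).le
  have H5 : Real.sqrt 3 * x ≤ 1.74 * x := mul_le_mul_of_nonneg_right hs hx
  rw [e1]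
  nlinarith [H1, H5, H6, sq_nonneg (x - 0.37), hx, hs, s0]

lemma scalar_ineq (x K P c : ℝ) (hx : 0 ≤ x) (hK : 1 ≤ K) (hP : 1 ≤ P)
    (hc : c * (4 * Real.sqrt 3 * P) = 1)
    (hcore : Real.sqrt 3 * (1 + 2 * x) ≤ 2 * (K * P)) :
    (c + c ^ 2 + 2 * c * K) * (1 + 2 * x) ≤ (2 / 3) * K ^ 2 := by
  have s0 : 0 ≤ Real.sqrt 3 := Real.sqrt_nonneg 3
  have s3 : Real.sqrt 3 * Real.sqrt 3 = 3 := Real.mul_self_sqrt (by norm_num)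
  have s1 : 1 ≤ Real.sqrt 3 := by nlinarith
  have hq : (0 : ℝ) < 4 * Real.sqrt 3 * P := by positivity
  have hc0 : 0 < c := by
    rcases lt_trichotomy c 0 with h | h | h
    · nlinarith [mul_neg_of_neg_of_pos h hq]
    · rw [h, zero_mul] at hc; norm_num at hc
    · exact h
  have hc4 : c ≤ 1 / 4 := by
    nlinarith [mul_nonneg hc0.le (show (0 : ℝ) ≤ 4 * Real.sqrt 3 * P - 4 by nlinarith)]
  have f1 : (c * K) * (Real.sqrt 3 * (1 + 2 * x)) ≤ (c * K) * (2 * (K * P)) :=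
    mul_le_mul_of_nonneg_left hcore (by positivity)
  have f2 : Real.sqrt 3 * ((c * K) * (Real.sqrt 3 * (1 + 2 * x))) ≤
      Real.sqrt 3 * ((c * K) * (2 * (K * P))) := mul_le_mul_of_nonneg_left f1 s0
  have e1 : Real.sqrt 3 * ((c * K) * (Real.sqrt 3 * (1 + 2 * x))) = 3 * (c * K * (1 + 2 * x)) := by
    linear_combination (c * K * (1 + 2 * x)) * s3
  have e3 : c * (Real.sqrt 3 * P) = 1 / 4 := by linear_combination hc / 4
  have e2 : Real.sqrt 3 * ((c * K) * (2 * (K * P))) = K ^ 2 / 2 := by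
    rw [show Real.sqrt 3 * ((c * K) * (2 * (K * P))) = K ^ 2 * (2 * (c * (Real.sqrt 3 * P))) by
      ring, e3]
    ring
  rw [e1, e2] at f2
  have hx2 : (0 : ℝ) ≤ 1 + 2 * x := by linarith
  nlinarith [mul_nonneg (show (0 : ℝ) ≤ 2 * c * K - c - c ^ 2 by nlinarith) hx2]

set_option maxHeartbeats 2000000 in
theorem stmt7 (α : ℝ) (hα : 2 < α) (H : M33 → ℝ)
    (hH0 : ∀ A, 0 ≤ H A)
    (hH1 : ∀ A, H A ≤ (1 / (2 : ℝ) ^ (α / 2)) * (1 / α) * fnorm A ^ α)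
    (lam mu : M33)
    (hsmall : fnorm mu ≤
        (1 / (4 * (3 : ℝ) ^ ((α / (α - 2)) / 2))) *
          fnorm lam ^ (1 / (2 - α / (α - 1)))) :
    (((1 / (4 * (3 : ℝ) ^ ((α / (α - 2)) / 2))) *
        (fnorm lam ^ (α / (α - 2)) + fnorm mu ^ (α / (α - 1))) : ℝ) : EReal) ≤
      gH H lam mu := by
  have hα0 : (0 : ℝ) < α := by linarith
  have ht : (0 : ℝ) < α - 2 := by linarith
  have hm1 : (0 : ℝ) < α - 1 := by linarith
  have hα0' : α ≠ 0 := ne_of_gt hα0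
  have ht' : α - 2 ≠ 0 := ne_of_gt ht
  have hm1' : α - 1 ≠ 0 := ne_of_gt hm1
  have hexp_mu : 1 / (2 - α / (α - 1)) = (α - 1) / (α - 2) := by
    rw [show 2 - α / (α - 1) = (α - 2) / (α - 1) by field_simp; try ring; try tauto; try simp, one_div_div]
  rw [hexp_mu] at hsmall
  set β := α / (α - 2) with hβdef
  set c := 1 / (4 * (3 : ℝ) ^ (β / 2)) with hcdef
  set A' := α / (α - 1) with hA'def
  have hβpos : 0 < β := div_pos hα0 ht
  have h3pow : (0 : ℝ) < (3 : ℝ) ^ (β / 2) := Real.rpow_pos_of_pos (by norm_num) _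
  have h3pow1 : (1 : ℝ) ≤ (3 : ℝ) ^ (β / 2) := Real.one_le_rpow (by norm_num) (by positivity)
  have hc0 : 0 < c := by rw [hcdef]; positivity
  have hc14 : c ≤ 1 / 4 := by
    rw [hcdef]
    exact one_div_le_one_div_of_le (by norm_num) (by linarith [h3pow1])
  set L := fnorm lam with hLdef
  have hL0 : 0 ≤ L := Real.sqrt_nonneg _
  have hA'1 : 1 ≤ A' := by rw [hA'def, le_div_iff₀ hm1]; linarith
  have hA'0 : (0 : ℝ) ≤ A' := by linarith
  have hgoal : ∀ A : M33,
      c * (L ^ β + fnorm mu ^ A') ≤ dotM A mu + dotM lam (Tmap A) - H A →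
      ((c * (L ^ β + fnorm mu ^ A') : ℝ) : EReal) ≤ gH H lam mu := by
    intro A hA
    calc ((c * (L ^ β + fnorm mu ^ A') : ℝ) : EReal)
        ≤ ((dotM A mu + dotM lam (Tmap A) - H A : ℝ) : EReal) := by
          exact_mod_cast EReal.coe_le_coe_iff.mpr hA
      _ ≤ gH H lam mu :=
          le_iSup (fun B : M33 => ((dotM B mu + dotM lam (Tmap B) - H B : ℝ) : EReal)) A
  rcases eq_or_lt_of_le hL0 with hL | hL
  · -- degenerate case `fnorm lam = 0`
    have hmu0 : fnorm mu = 0 := by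
      have h1 : fnorm mu ≤ c * (0 : ℝ) ^ ((α - 1) / (α - 2)) := by rw [← hL] at hsmall; exact hsmall
      rw [Real.zero_rpow (by positivity)] at h1
      have := Real.sqrt_nonneg (∑ i, ∑ j, (mu i j) ^ 2)
      simp only [mul_zero] at h1
      exact le_antisymm h1 this
    have hval : c * (L ^ β + fnorm mu ^ A') = 0 := by
      rw [← hL, hmu0, Real.zero_rpow (ne_of_gt hβpos), Real.zero_rpow (by positivity)]
      ring
    apply hgoal (fun _ _ => 0)
    have hd1 : dotM (fun _ _ => 0) mu = 0 := by simp [dotM]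
    have hd2 : dotM lam (Tmap (fun _ _ => 0)) = 0 := by simp [dotM, Tmap]
    have hf0 : fnorm (fun _ _ => 0) = 0 := by simp [fnorm]
    have hH1' := hH1 (fun _ _ => 0)
    rw [hf0, Real.zero_rpow (ne_of_gt hα0), mul_zero] at hH1'
    have hH0' := hH0 (fun _ _ => 0)
    rw [hval, hd1, hd2]
    linarith
  · -- main case `0 < fnorm lam`
    obtain ⟨Z, p, hbig⟩ := exists_big_entry lam
    set σ : ℝ := if 0 ≤ lam Z p then (1 : ℝ) else -1 with hσdef
    have hσ : σ = 1 ∨ σ = -1 := by rw [hσdef]; split_ifs <;> simp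
    have hσlam : σ * lam Z p = |lam Z p| := by
      rw [hσdef]; split_ifs with h
      · rw [abs_of_nonneg h]; ring
      · rw [abs_of_neg (lt_of_not_ge h)]; ring
    have h43L : (0 : ℝ) < 4 / 3 * L := by positivity
    set s := ((4 : ℝ) / 3 * L) ^ (1 / (α - 2)) with hsdef
    have hs0 : 0 < s := Real.rpow_pos_of_pos h43L _
    set K := ((4 : ℝ) / 3) ^ (1 / (α - 2)) with hKdef
    have hK1 : 1 ≤ K := Real.one_le_rpow (by norm_num) (by positivity)
    set P := (3 : ℝ) ^ (1 / (α - 2)) with hPdef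
    have hP1 : 1 ≤ P := Real.one_le_rpow (by norm_num) (by positivity)
    -- `c` in terms of `√3` and `P`
    have hsplit : (3 : ℝ) ^ (β / 2) = Real.sqrt 3 * P := by
      rw [show β / 2 = 1 / 2 + 1 / (α - 2) by rw [hβdef]; field_simp; try ring; try tauto; try simp,
        Real.rpow_add (by norm_num), hPdef, ← Real.sqrt_eq_rpow]
    have hsqrt3 : (0 : ℝ) < Real.sqrt 3 := Real.sqrt_pos.mpr (by norm_num)
    have hc_eq : c * (4 * Real.sqrt 3 * P) = 1 := by
      rw [hcdef, hsplit]
      field_simp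
      try ring
      try tauto
    have hKP : K * P = (4 : ℝ) ^ (1 / (α - 2)) := by
      rw [hKdef, hPdef, ← Real.mul_rpow (by norm_num) (by norm_num)]
      try norm_num
    have hcore : Real.sqrt 3 * (1 + 2 * (1 / (α - 2))) ≤ 2 * (K * P) := by
      rw [hKP]; exact core_ineq _ (by positivity)
    have scalar := scalar_ineq (1 / (α - 2)) K P c (by positivity) hK1 hP1 hc_eq hcore
    have h12x : 1 + 2 * (1 / (α - 2)) = β := by rw [hβdef]; field_simp; try ring; try tauto; try simp
    rw [h12x] at scalar
    have hmain0 : (c + c ^ 2 + 2 * c * K) * α ≤ 2 / 3 * K ^ 2 * (α - 2) := by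
      have h := mul_le_mul_of_nonneg_right scalar ht.le
      calc (c + c ^ 2 + 2 * c * K) * α = ((c + c ^ 2 + 2 * c * K) * β) * (α - 2) := by
            rw [hβdef]; field_simp; try ring; try tauto; try simp
        _ ≤ 2 / 3 * K ^ 2 * (α - 2) := h
    have hdiv : c + c ^ 2 + 2 * c * K ≤ 2 / 3 * K ^ 2 - 4 / (3 * α) * K ^ 2 := by
      have h2 : (2 / 3 * K ^ 2 - 4 / (3 * α) * K ^ 2) * α = 2 / 3 * K ^ 2 * (α - 2) := by
        field_simp; try ring; try tauto; try simp
      apply le_of_mul_le_mul_right _ hα0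
      rw [h2]; exact hmain0
    -- rpow bookkeeping
    have hsrw : s = K * L ^ (1 / (α - 2)) := by
      rw [hsdef, hKdef, Real.mul_rpow (by norm_num) hL0]
    have hLe2 : (L ^ (1 / (α - 2))) ^ (2 : ℕ) = L ^ ((2 : ℝ) / (α - 2)) := by
      rw [← Real.rpow_natCast (L ^ (1 / (α - 2))) 2, ← Real.rpow_mul hL0]
      congr 1; push_cast; ring
    have hKe2 : K ^ (2 : ℕ) = ((4 : ℝ) / 3) ^ ((2 : ℝ) / (α - 2)) := by
      rw [hKdef, ← Real.rpow_natCast (((4 : ℝ) / 3) ^ (1 / (α - 2))) 2,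
        ← Real.rpow_mul (by norm_num)]
      congr 1; push_cast; ring
    have hs2L : s ^ 2 * L = K ^ 2 * L ^ β := by
      rw [hsrw, mul_pow, hLe2]
      rw [show K ^ 2 * L ^ ((2 : ℝ) / (α - 2)) * L
          = K ^ 2 * (L ^ ((2 : ℝ) / (α - 2)) * L ^ (1 : ℝ)) by rw [Real.rpow_one]; ring,
        ← Real.rpow_add hL]
      congr 2
      rw [hβdef]; field_simp; ring
    have hβsum : β = (2 : ℝ) / (α - 2) + 1 := by rw [hβdef]; field_simp; ring
    have hsα : s ^ α = 4 / 3 * K ^ 2 * L ^ β := by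
      rw [hsdef, ← Real.rpow_mul h43L.le,
        show 1 / (α - 2) * α = β by rw [hβdef]; field_simp; try ring; try tauto,
        Real.mul_rpow (by norm_num) hL0,
        show ((4 : ℝ) / 3) ^ β = 4 / 3 * K ^ 2 by
          rw [hβsum, Real.rpow_add (by norm_num), Real.rpow_one, hKe2]; ring]
    have hsmu : s * fnorm mu ≤ c * K * L ^ β := by
      have h1 : s * fnorm mu ≤ s * (c * L ^ ((α - 1) / (α - 2))) :=
        mul_le_mul_of_nonneg_left hsmall hs0.le
      have h2 : s * (c * L ^ ((α - 1) / (α - 2))) = c * K * L ^ β := by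
        rw [hsrw, show K * L ^ (1 / (α - 2)) * (c * L ^ ((α - 1) / (α - 2)))
            = c * K * (L ^ (1 / (α - 2)) * L ^ ((α - 1) / (α - 2))) by ring,
          ← Real.rpow_add hL]
        congr 2
        rw [hβdef, ← add_div]
        congr 1
        ring
      exact h1.trans_eq h2
    have hmuβ : fnorm mu ^ A' ≤ c * L ^ β := by
      have hmu0 : 0 ≤ fnorm mu := Real.sqrt_nonneg _
      have h1 : fnorm mu ^ A' ≤ (c * L ^ ((α - 1) / (α - 2))) ^ A' :=
        Real.rpow_le_rpow hmu0 hsmall hA'0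
      have hexp2 : (α - 1) / (α - 2) * A' = β := by
        rw [hA'def, hβdef]; field_simp; try ring; try tauto; try simp
      have h2 : (c * L ^ ((α - 1) / (α - 2))) ^ A' = c ^ A' * L ^ β := by
        rw [Real.mul_rpow hc0.le (Real.rpow_nonneg hL0 _), ← Real.rpow_mul hL0, hexp2]
      have h3 : c ^ A' ≤ c := by
        calc c ^ A' ≤ c ^ (1 : ℝ) :=
            Real.rpow_le_rpow_of_exponent_ge hc0 (by linarith) hA'1
          _ = c := Real.rpow_one c
      calc fnorm mu ^ A' ≤ c ^ A' * L ^ β := h1.trans_eq h2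
        _ ≤ c * L ^ β := mul_le_mul_of_nonneg_right h3 (Real.rpow_nonneg hL0 _)
    have hfA : fnorm (Amat Z p s σ) = s * Real.sqrt 2 := by
      rw [fnorm, sq_sum_Amat, show s ^ 2 + (σ * s) ^ 2 = s ^ 2 * 2 by
          rcases hσ with h | h <;> rw [h] <;> ring,
        Real.sqrt_mul (sq_nonneg s), Real.sqrt_sq hs0.le]
    have hHA : H (Amat Z p s σ) ≤ s ^ α / α := by
      have h1 := hH1 (Amat Z p s σ)
      rw [hfA] at h1
      have h2 : (s * Real.sqrt 2) ^ α = s ^ α * (2 : ℝ) ^ (α / 2) := by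
        rw [Real.mul_rpow hs0.le (Real.sqrt_nonneg 2), Real.sqrt_eq_rpow,
          ← Real.rpow_mul (by norm_num : (0 : ℝ) ≤ 2)]
        congr 1
        ring
      rw [h2] at h1
      have h2pos : (0 : ℝ) < (2 : ℝ) ^ (α / 2) := Real.rpow_pos_of_pos (by norm_num) _
      have h3 : 1 / (2 : ℝ) ^ (α / 2) * (1 / α) * (s ^ α * (2 : ℝ) ^ (α / 2)) = s ^ α / α := by
        field_simp
        try ring
        try tauto
      linarith [h1.trans_eq h3]
    have hTA : 2 / 3 * (K ^ 2 * L ^ β) ≤ dotM lam (Tmap (Amat Z p s σ)) := by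
      rw [dotM_Tmap_Amat,
        show 2 * σ * s ^ 2 * lam Z p = 2 * s ^ 2 * (σ * lam Z p) by ring, hσlam]
      have h1 : L / 3 ≤ |lam Z p| := by linarith
      have h3 : 2 * s ^ 2 * (L / 3) ≤ 2 * s ^ 2 * |lam Z p| :=
        mul_le_mul_of_nonneg_left h1 (by positivity)
      refine le_trans (le_of_eq ?_) h3
      rw [← hs2L]; ring
    have hmuA : -(2 * (c * K * L ^ β)) ≤ dotM (Amat Z p s σ) mu := by
      rw [dotM_Amat]
      have b1 := abs_entry_le_fnorm mu (Z + 1) (p + 1)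
      have b2 := abs_entry_le_fnorm mu (Z + 2) (p + 2)
      have n1 := neg_abs_le (mu (Z + 1) (p + 1))
      have n2 := neg_abs_le (mu (Z + 2) (p + 2))
      have m2 := le_abs_self (mu (Z + 2) (p + 2))
      have l1 : -(s * fnorm mu) ≤ s * mu (Z + 1) (p + 1) := by
        have hm : -fnorm mu ≤ mu (Z + 1) (p + 1) := le_trans (neg_le_neg b1) n1
        have h := mul_le_mul_of_nonneg_left hm hs0.le
        linarith [h]
      have l2 : -(s * fnorm mu) ≤ σ * s * mu (Z + 2) (p + 2) := by
        rcases hσ with h | h <;> rw [h]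
        · have hm : -fnorm mu ≤ mu (Z + 2) (p + 2) := le_trans (neg_le_neg b2) n2
          have h := mul_le_mul_of_nonneg_left hm hs0.le
          linarith [h]
        · have hm : -fnorm mu ≤ -mu (Z + 2) (p + 2) := by linarith [m2, b2]
          have h := mul_le_mul_of_nonneg_left hm hs0.le
          linarith [h]
      linarith [hsmu, l1, l2]
    apply hgoal (Amat Z p s σ)
    have hLβpos : 0 < L ^ β := Real.rpow_pos_of_pos hL _
    have lhs_le : c * (L ^ β + fnorm mu ^ A') ≤ (c + c ^ 2) * L ^ β := by
      have h := mul_le_mul_of_nonneg_left hmuβ hc0.le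
      linarith [h]
    have hdivL := mul_le_mul_of_nonneg_right hdiv hLβpos.le
    have hHA' : H (Amat Z p s σ) ≤ 4 / 3 * K ^ 2 * L ^ β / α := by
      rw [← hsα]; exact hHA
    have hdivL' : (2 / 3 * K ^ 2 - 4 / (3 * α) * K ^ 2) * L ^ β
        = 2 / 3 * (K ^ 2 * L ^ β) - 4 / 3 * K ^ 2 * L ^ β / α := by
      field_simp
      try ring
      try tauto
    rw [hdivL'] at hdivL
    linarith [hdivL, hTA, hmuA, hHA', lhs_le]
end
end
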